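/- arXiv:2110.01213 — 2 statements merged into one kernel-verified Lean document; each statement's English description precedes it below -/
import Mathlib

section
/- If two maximal cliques of a graph, each of size at least k, overlap on at least k-1 vertices, then every k-clique contained in the first and every k-clique contained in the second lie in the same k-clique community. -/
lemma aux_same_clique_eqv {V : Type*} [DecidableEq V] (G : SimpleGraph V) (k : ℕ)
    (M : Finset V) (hM : G.IsClique (M : Set V)) :
    ∀ n (s t : {s : Finset V // G.IsNClique k s}), (s.1 \ t.1).card ≤ n →
      s.1 ⊆ M → t.1 ⊆ M →
      Relation.EqvGen (fun a b : {s : Finset V // G.IsNClique k s} =>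
        (a.1 ∩ b.1).card = k - 1) s t := by
  intro n
  induction n with
  | zero =>
    intro s t h hs ht
    have hsub : s.1 ⊆ t.1 :=
      Finset.sdiff_eq_empty_iff_subset.mp (Finset.card_eq_zero.mp (Nat.le_zero.mp h))
    have : s.1 = t.1 := Finset.eq_of_subset_of_card_le hsub
      (by rw [s.2.card_eq, t.2.card_eq])
    rw [Subtype.ext this]
    exact Relation.EqvGen.refl t
  | succ n ih =>
    intro s t h hs ht
    by_cases hst : s.1 = t.1
    · rw [Subtype.ext hst]; exact Relation.EqvGen.refl t
    · have hsd : (s.1 \ t.1).Nonempty := by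
        rw [Finset.sdiff_nonempty]
        intro hsub
        exact hst (Finset.eq_of_subset_of_card_le hsub (by rw [s.2.card_eq, t.2.card_eq]))
      obtain ⟨x, hx⟩ := hsd
      have htd : (t.1 \ s.1).Nonempty := by
        rw [Finset.sdiff_nonempty]
        intro hsub
        exact hst (Finset.eq_of_subset_of_card_le hsub
          (by rw [s.2.card_eq, t.2.card_eq])).symm
      obtain ⟨y, hy⟩ := htd
      obtain ⟨hxs, hxt⟩ := Finset.mem_sdiff.mp hx
      obtain ⟨hyt, hys⟩ := Finset.mem_sdiff.mp hy
      set s' : Finset V := insert y (s.1.erase x) with hs'def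
      have hys' : y ∉ s.1.erase x := fun hmem => hys (Finset.mem_of_mem_erase hmem)
      have hs'sub : s' ⊆ M := by
        intro z hz
        rcases Finset.mem_insert.mp hz with rfl | hz
        · exact ht hyt
        · exact hs (Finset.mem_of_mem_erase hz)
      have hs'card : s'.card = k := by
        rw [Finset.card_insert_of_notMem hys', Finset.card_erase_of_mem hxs, s.2.card_eq]
        have : 1 ≤ k := by
          rw [← s.2.card_eq]; exact Finset.card_pos.mpr ⟨x, hxs⟩
        omega
      have hs'cl : G.IsNClique k s' := ⟨hM.subset (by exact_mod_cast hs'sub), hs'card⟩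
      have hrel : (s.1 ∩ s').card = k - 1 := by
        have : s.1 ∩ s' = s.1.erase x := by
          rw [hs'def, Finset.inter_insert_of_notMem hys]
          exact Finset.inter_eq_right.mpr (Finset.erase_subset _ _)
        rw [this, Finset.card_erase_of_mem hxs, s.2.card_eq]
      have hdec : (s' \ t.1).card ≤ n := by
        have h1 : s' \ t.1 = (s.1.erase x) \ t.1 := by
          rw [hs'def, Finset.insert_sdiff_of_mem _ hyt]
        have h2 : (s.1.erase x) \ t.1 = (s.1 \ t.1).erase x := by
          ext z; simp [Finset.mem_erase, Finset.mem_sdiff]; tauto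
        rw [h1, h2, Finset.card_erase_of_mem hx]
        omega
      exact Relation.EqvGen.trans _ _ _ (Relation.EqvGen.rel s ⟨s', hs'cl⟩ hrel)
        (ih ⟨s', hs'cl⟩ t hdec hs'sub ht)

/-- If two maximal cliques, each of size at least `k`, overlap on at least `k-1`
vertices, then every `k`-clique contained in the first and every `k`-clique
contained in the second lie in the same `k`-clique community (equivalence class
under the equivalence relation generated by adjacency). -/
theorem maximalCliques_overlap_same_community {V : Type*} [DecidableEq V]
    (G : SimpleGraph V) (k : ℕ) (M₁ M₂ : Finset V)
    (hM₁ : G.IsClique (M₁ : Set V))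
    (hM₂ : G.IsClique (M₂ : Set V))
    (hmax₁ : ∀ t : Finset V, G.IsClique (t : Set V) → M₁ ⊆ t → t = M₁)
    (hmax₂ : ∀ t : Finset V, G.IsClique (t : Set V) → M₂ ⊆ t → t = M₂)
    (hk₁ : k ≤ M₁.card) (hk₂ : k ≤ M₂.card)
    (hoverlap : k - 1 ≤ (M₁ ∩ M₂).card)
    (c₁ c₂ : {s : Finset V // G.IsNClique k s})
    (hc₁ : c₁.1 ⊆ M₁) (hc₂ : c₂.1 ⊆ M₂) :
    Relation.EqvGen
      (fun a b : {s : Finset V // G.IsNClique k s} =>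
        (a.1 ∩ b.1).card = k - 1) c₁ c₂ := by
  obtain ⟨S, hSsub, hScard⟩ := Finset.exists_subset_card_eq hoverlap
  have hS1 : S ⊆ M₁ := hSsub.trans Finset.inter_subset_left
  have hS2 : S ⊆ M₂ := hSsub.trans Finset.inter_subset_right
  obtain ⟨t₁, hSt₁, ht₁M, ht₁card⟩ :=
    Finset.exists_subsuperset_card_eq hS1 (by omega) hk₁
  obtain ⟨t₂, hSt₂, ht₂M, ht₂card⟩ :=
    Finset.exists_subsuperset_card_eq hS2 (by omega) hk₂
  have ht₁ : G.IsNClique k t₁ := ⟨hM₁.subset (by exact_mod_cast ht₁M), ht₁card⟩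
  have ht₂ : G.IsNClique k t₂ := ⟨hM₂.subset (by exact_mod_cast ht₂M), ht₂card⟩
  have e1 := aux_same_clique_eqv G k M₁ hM₁ (c₁.1 \ t₁).card c₁ ⟨t₁, ht₁⟩ le_rfl hc₁ ht₁M
  have e3 := aux_same_clique_eqv G k M₂ hM₂ (t₂ \ c₂.1).card ⟨t₂, ht₂⟩ c₂ le_rfl ht₂M hc₂
  have e2 : Relation.EqvGen
      (fun a b : {s : Finset V // G.IsNClique k s} =>
        (a.1 ∩ b.1).card = k - 1) ⟨t₁, ht₁⟩ ⟨t₂, ht₂⟩ := by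
    by_cases h : t₁ = t₂
    · subst h; exact Relation.EqvGen.refl _
    · apply Relation.EqvGen.rel
      have hle : (t₁ ∩ t₂).card ≤ k - 1 := by
        have hlt : (t₁ ∩ t₂).card < k := by
          rw [← ht₁card]
          apply Finset.card_lt_card
          rw [Finset.ssubset_iff_subset_ne]
          refine ⟨Finset.inter_subset_left, fun heq => h ?_⟩
          exact Finset.eq_of_subset_of_card_le (Finset.inter_eq_left.mp heq)
            (by rw [ht₁card, ht₂card])
        omega
      have hge : k - 1 ≤ (t₁ ∩ t₂).card := by
        rw [← hScard]
        exact Finset.card_le_card (Finset.subset_inter hSt₁ hSt₂)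
      show (t₁ ∩ t₂).card = k - 1
      omega
  exact Relation.EqvGen.trans _ _ _ e1 (Relation.EqvGen.trans _ _ _ e2 e3)
end

section
/- In the example graph on vertices {1,...,10} with edges forming the 4-cliques {1,3,4,6}, {1,3,6,9}, {3,6,8,9}, {6,7,8,9}, {5,7,8,9}, {2,5,7,8}, {2,4,5,7}, {4,6,7,10} (and no other edges beyond those induced), the set {4,6,7} is a clique but is not contained in any of the first seven 4-cliques, yet every 2-element subset of {4,6,7} is contained in at least one of them. -/
/-- The first seven 4-cliques of the example graph. -/
def firstSeven : List (Finset ℕ) :=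
  [{1,3,4,6}, {1,3,6,9}, {3,6,8,9}, {6,7,8,9}, {5,7,8,9}, {2,5,7,8}, {2,4,5,7}]

/-- All eight 4-cliques of the example graph. -/
def allEight : List (Finset ℕ) := firstSeven ++ [{4,6,7,10}]

/-- The example graph: its edges are all pairs of distinct vertices both contained
in one of the listed 4-element sets. -/
def exGraph : SimpleGraph ℕ :=
  SimpleGraph.fromRel (fun a b => ∃ s ∈ allEight, a ∈ s ∧ b ∈ s)

/-- In the example graph, `{4,6,7}` is a clique, it is not contained in any of
the first seven 4-cliques, yet every 2-element subset of `{4,6,7}` is contained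
in at least one of them. -/
theorem cpmz_counterexample :
    exGraph.IsClique (({4,6,7} : Finset ℕ) : Set ℕ) ∧
    (∀ s ∈ firstSeven, ¬ ({4,6,7} : Finset ℕ) ⊆ s) ∧
    (∀ T : Finset ℕ, T ⊆ ({4,6,7} : Finset ℕ) → T.card = 2 →
      ∃ s ∈ firstSeven, T ⊆ s) := by
  refine ⟨?_, ?_, ?_⟩
  · intro a ha b hb hab
    simp only [Finset.coe_insert, Set.mem_insert_iff, Finset.coe_singleton,
      Set.mem_singleton_iff] at ha hb
    simp only [exGraph, allEight, firstSeven, SimpleGraph.fromRel_adj]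
    refine ⟨hab, Or.inl ?_⟩
    rcases ha with rfl|rfl|rfl <;> rcases hb with rfl|rfl|rfl <;>
      exact ⟨{4,6,7,10}, by decide, by decide, by decide⟩
  · decide
  · intro T hT hcard
    have : T ∈ ({4,6,7} : Finset ℕ).powerset := Finset.mem_powerset.mpr hT
    fin_cases this <;> simp_all <;> decide
end
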